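/- For fixed blocklength n > 0 and bits k > 0, the normal-approximation argument x(γ) = (n·log₂(1+γ) − k)/√(n·V(γ)) with V(γ) = (log₂e)²/2·(1 − (1+γ)^{−2}) is strictly increasing in γ for γ > 0; hence the error probability Q(x(γ)) is strictly decreasing in the SNR γ. -/

import Mathlib

open Set

private lemma aux_deriv (n k : ℝ) (hn : 0 < n) (hk : 0 < k) (γ : ℝ) (hγ : 0 < γ) :
    ∃ d, 0 < d ∧ HasDerivAt (fun s => (n * Real.log (1 + s) - k * Real.log 2) /
      Real.sqrt (1 - ((1 + s) ^ 2)⁻¹)) d γ := by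
  have hu1 : 1 < 1 + γ := by linarith
  have hupos : (0:ℝ) < 1 + γ := by linarith
  have ht : 0 < 1 - ((1 + γ) ^ 2)⁻¹ := by
    have h2 : 1 < (1 + γ) ^ 2 := by nlinarith
    have := inv_lt_one_of_one_lt₀ h2
    linarith
  set u := 1 + γ with hu
  set g := Real.sqrt (1 - (u ^ 2)⁻¹) with hg
  have hgpos : 0 < g := Real.sqrt_pos.2 ht
  have hg2 : g ^ 2 = 1 - (u ^ 2)⁻¹ := Real.sq_sqrt ht.le
  have h1 : HasDerivAt (fun s : ℝ => 1 + s) 1 γ := (hasDerivAt_id γ).const_add 1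
  have h2 : HasDerivAt (fun s : ℝ => (1 + s) ^ 2) (2 * u) γ := by
    simpa using h1.fun_pow 2
  have h3 : HasDerivAt (fun s : ℝ => ((1 + s) ^ 2)⁻¹) (-(2 * u) / ((u ^ 2) ^ 2)) γ :=
    h2.inv (by positivity)
  have h4 : HasDerivAt (fun s : ℝ => 1 - ((1 + s) ^ 2)⁻¹) (2 * u / ((u ^ 2) ^ 2)) γ := by
    simpa [neg_div] using h3.const_sub 1
  have h5 : HasDerivAt (fun s : ℝ => Real.sqrt (1 - ((1 + s) ^ 2)⁻¹))
      (2 * u / ((u ^ 2) ^ 2) / (2 * g)) γ := h4.sqrt ht.ne'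
  have h6 : HasDerivAt (fun s : ℝ => Real.log (1 + s)) (1 / u) γ := h1.log hupos.ne'
  have h7 : HasDerivAt (fun s : ℝ => n * Real.log (1 + s) - k * Real.log 2) (n * (1 / u)) γ :=
    (h6.const_mul n).sub_const _
  have h8 := h7.div h5 hgpos.ne'
  refine ⟨_, ?_, h8⟩
  -- positivity of the derivative
  have hL : 0 < Real.log 2 := Real.log_pos one_lt_two
  have hlog : Real.log u < u - 1 := Real.log_lt_sub_one_of_pos hupos hu1.ne'
  have key : 0 < n * (u ^ 2 - 1) - (n * Real.log u - k * Real.log 2) := by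
    have h9 : u - 1 ≤ u ^ 2 - 1 := by nlinarith
    have : 0 < k * Real.log 2 := by positivity
    nlinarith
  have hune : u ≠ 0 := hupos.ne'
  have hg2' : g ^ 2 * u ^ 2 = u ^ 2 - 1 := by
    rw [hg2]; field_simp
  have heq : n * (1 / u) * g - (n * Real.log u - k * Real.log 2) *
      (2 * u / ((u ^ 2) ^ 2) / (2 * g)) =
      (n * (u ^ 2 - 1) - (n * Real.log u - k * Real.log 2)) / (u ^ 3 * g) := by
    rw [eq_div_iff (by positivity : u ^ 3 * g ≠ 0), ← hg2']
    field_simp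
  rw [heq]
  positivity

private lemma phi_mono (n k : ℝ) (hn : 0 < n) (hk : 0 < k) :
    StrictMonoOn (fun s => (n * Real.log (1 + s) - k * Real.log 2) /
      Real.sqrt (1 - ((1 + s) ^ 2)⁻¹)) (Set.Ioi (0:ℝ)) := by
  apply strictMonoOn_of_deriv_pos (convex_Ioi 0)
  · intro γ hγ
    obtain ⟨d, _, hd⟩ := aux_deriv n k hn hk γ hγ
    exact hd.differentiableAt.continuousAt.continuousWithinAt
  · intro γ hγ
    rw [interior_Ioi] at hγ
    obtain ⟨d, hdpos, hd⟩ := aux_deriv n k hn hk γ hγ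
    rw [hd.deriv]; exact hdpos

/-- The normal-approximation argument
`x(γ) = (n log₂(1+γ) - k)/√(n V(γ))` is strictly increasing in `γ > 0`;
hence for any strictly decreasing `Q`, the error probability `Q(x(γ))` is
strictly decreasing in the SNR. -/
theorem stmt_17 (n k : ℝ) (hn : 0 < n) (hk : 0 < k)
    (V x : ℝ → ℝ)
    (hV : ∀ γ, V γ = (Real.logb 2 (Real.exp 1)) ^ 2 / 2 * (1 - (1 + γ) ^ (-2 : ℤ)))
    (hx : ∀ γ, x γ = (n * Real.logb 2 (1 + γ) - k) / Real.sqrt (n * V γ))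
    (Q : ℝ → ℝ) (hQ : StrictAnti Q) :
    StrictMonoOn x (Set.Ioi (0:ℝ)) ∧ StrictAntiOn (Q ∘ x) (Set.Ioi (0:ℝ)) := by
  have hL : 0 < Real.log 2 := Real.log_pos one_lt_two
  have heq : ∀ γ ∈ Set.Ioi (0:ℝ), x γ = (Real.sqrt 2 / Real.sqrt n) *
      ((n * Real.log (1 + γ) - k * Real.log 2) / Real.sqrt (1 - ((1 + γ) ^ 2)⁻¹)) := by
    intro γ hγ
    have hγ' : 0 < γ := hγ
    have hupos : (0:ℝ) < 1 + γ := by linarith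
    have ht : 0 < 1 - ((1 + γ) ^ 2)⁻¹ := by
      have h2 : 1 < (1 + γ) ^ 2 := by nlinarith
      have := inv_lt_one_of_one_lt₀ h2
      linarith
    have hz : ((1 + γ):ℝ) ^ (-2 : ℤ) = ((1 + γ) ^ 2)⁻¹ := by
      rw [zpow_neg, zpow_two, sq]
    have hlogb : Real.logb 2 (Real.exp 1) = 1 / Real.log 2 := by
      simp [Real.logb, Real.log_exp]
    have hlogbu : Real.logb 2 (1 + γ) = Real.log (1 + γ) / Real.log 2 := rfl
    have hns : Real.sqrt (n * V γ) =
        Real.sqrt n * Real.sqrt (1 - ((1 + γ) ^ 2)⁻¹) / (Real.sqrt 2 * Real.log 2) := by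
      rw [hV, hlogb, hz]
      have hsq : (Real.sqrt n * Real.sqrt (1 - ((1 + γ) ^ 2)⁻¹) / (Real.sqrt 2 * Real.log 2)) ^ 2
          = n * ((1 / Real.log 2) ^ 2 / 2 * (1 - ((1 + γ) ^ 2)⁻¹)) := by
        rw [div_pow, mul_pow, mul_pow, Real.sq_sqrt hn.le, Real.sq_sqrt ht.le,
          Real.sq_sqrt (by norm_num : (0:ℝ) ≤ 2)]
        rw [div_eq_iff (by positivity : (2 * Real.log 2 ^ 2 : ℝ) ≠ 0)]
        field_simp
      rw [← hsq]
      exact Real.sqrt_sq (by positivity)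
    rw [hx, hns, hlogbu]
    have h1 : Real.sqrt n ≠ 0 := (Real.sqrt_pos.2 hn).ne'
    have h2 : Real.sqrt (1 - ((1 + γ) ^ 2)⁻¹) ≠ 0 := (Real.sqrt_pos.2 ht).ne'
    have h3 : Real.sqrt 2 ≠ 0 := by positivity
    have h2' : 0 < Real.sqrt (1 - ((1 + γ) ^ 2)⁻¹) := Real.sqrt_pos.2 ht
    generalize hG : Real.sqrt (1 - ((1 + γ) ^ 2)⁻¹) = G at h2 h2' ⊢
    field_simp [hL.ne']
  have hmono : StrictMonoOn x (Set.Ioi (0:ℝ)) := by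
    intro a ha b hb hab
    rw [heq a ha, heq b hb]
    exact mul_lt_mul_of_pos_left (phi_mono n k hn hk ha hb hab)
      (by positivity)
  exact ⟨hmono, fun a ha b hb hab => hQ (hmono ha hb hab)⟩
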